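/- With w_ν(ω,σ,I) as in the recursive construction and I_m the right subinterval of I of length 3^{-m}|I|, one has for every ν ≥ 1 and 0 ≤ m ≤ k−2: ∫_{I_m} w_ν(ω,σ,I) ≤ ω Σ_{j=m}^{k−1} |I_j| ≤ (9ω/2)|I_{m+1}|. -/

import Mathlib

/-!
Write `w_{ν+1}` as a sum of blocks, the `j`-th carried by `I_j \ I_{j+1}` and made of
`(ω/p) χ_{I_j^{(1)}}` and `w_ν(2ω, σ/2, I_j^{(2)})`, plus a last piece carried by `I_{k-1}`.
By induction every `w_ν(ω, σ, I)` has mean `ω` over `I` (for `ν = 0` because `u + 1/u = 2√p`,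
for `ν ≥ 1` because the choice of `p` balances the geometric sum of the blocks). Only the blocks
with `j ≥ m` and the last piece meet `I_m`; the `j`-th block has total integral
`(ω/p + 2ω)/3 · |I_j| ≤ ω |I_j|` and the last piece at most `3εωh = ω |I_{k-1}|`, since `p ≥ 1`
and `4ε/(1+ε) ≤ 1`. The second inequality is the geometric series `Σ_{j ≥ m} 3^{-j} = (3/2) 3^{-m}`.
-/

open MeasureTheory

/-- `ε = 3^{-k}`. -/
noncomputable def eps (k : ℕ) : ℝ := (3:ℝ) ^ (-(k:ℤ))

/-- `p = (1/(3ε))((1+ε)/2 + 4ε²/(1+ε))`. -/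
noncomputable def pp (k : ℕ) : ℝ := (1/(3 * eps k)) * ((1 + eps k)/2 + 4 * (eps k)^2/(1 + eps k))

/-- `u = √p + √(p−1)`, the larger root of `u + 1/u = 2√p`. -/
noncomputable def uu (k : ℕ) : ℝ := Real.sqrt (pp k) + Real.sqrt (pp k - 1)

/-- The recursively defined weights `w_ν(ω, σ, I)` of the paper, on `I = [a, a+h)`
(the dual parameter `σ` is determined by `ωσ = p` and is omitted).
`W k ν ω a h` equals `w_ν(ω, p/ω, [a, a+h))` and vanishes outside `[a, a+h)`.

For `ν = 0`: `w₀ = (ω/√p)(u χ_{I₋} + u⁻¹ χ_{I₊})`.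

For `ν ≥ 1`, with `I_m` the right subinterval of `I` of length `3^{-m}|I|` and `J^{(i)}`
the `i`-th third of `J`:
`w_ν = (ω/p)(Σ_{m=0}^{k-2} χ_{I_m^{(1)}} + χ_{I_{k-1}^{(1)} ∪ I_{k-1}^{(2)}}
+ (4ε/(1+ε)) χ_{I_{k-1}^{(3)}}) + Σ_{m=0}^{k-2} w_{ν-1}(2ω, σ/2, I_m^{(2)})`. -/
noncomputable def W (k : ℕ) : ℕ → ℝ → ℝ → ℝ → ℝ → ℝ
  | 0, ω, a, h, x =>
      Set.indicator (Set.Ico a (a + h/2)) (fun _ => ω / Real.sqrt (pp k) * uu k) x +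
      Set.indicator (Set.Ico (a + h/2) (a + h)) (fun _ => ω / Real.sqrt (pp k) / uu k) x
  | (ν+1), ω, a, h, x =>
      (∑ m ∈ Finset.range (k-1),
        Set.indicator (Set.Ico (a + h - (3:ℝ)^(-(m:ℤ))*h) (a + h - (2/3)*(3:ℝ)^(-(m:ℤ))*h))
          (fun _ => ω / pp k) x) +
      Set.indicator (Set.Ico (a + h - (3:ℝ)^(1-(k:ℤ))*h) (a + h - (1/3)*(3:ℝ)^(1-(k:ℤ))*h))
        (fun _ => ω / pp k) x +
      Set.indicator (Set.Ico (a + h - (1/3)*(3:ℝ)^(1-(k:ℤ))*h) (a + h))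
        (fun _ => (4 * eps k/(1 + eps k)) * (ω / pp k)) x +
      ∑ m ∈ Finset.range (k-1),
        W k ν (2*ω) (a + h - (2/3)*(3:ℝ)^(-(m:ℤ))*h) ((1/3)*(3:ℝ)^(-(m:ℤ))*h) x

lemma eps_pos (k : ℕ) : 0 < eps k := by unfold eps; positivity

lemma eps_le_one_third {k : ℕ} (hk : 1 ≤ k) : eps k ≤ 1 / 3 := by
  have : (3:ℝ) ^ (-(k:ℤ)) ≤ (3:ℝ) ^ (-(1:ℤ)) := zpow_le_zpow_right₀ (by norm_num) (by omega)
  simpa [eps] using this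

lemma pp_pos (k : ℕ) : 0 < pp k := by have := eps_pos k; unfold pp; positivity

lemma three_mul_eps_mul_pp (k : ℕ) :
    3 * eps k * pp k = (1 + eps k) / 2 + 4 * eps k ^ 2 / (1 + eps k) := by
  have := eps_pos k
  rw [pp]; field_simp

/- `(1+ε)² + 8ε² - 6ε(1+ε) = (1-3ε)(1-ε)`, which is nonnegative for `ε ≤ 1/3`. -/
lemma one_le_pp {k : ℕ} (hk : 1 ≤ k) : 1 ≤ pp k := by
  have he := eps_pos k
  have he3 := eps_le_one_third hk
  rw [← mul_le_mul_iff_right₀ (by positivity : 0 < 3 * eps k), mul_one, three_mul_eps_mul_pp,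
    div_add_div _ _ two_ne_zero (by positivity), le_div_iff₀ (by positivity)]
  nlinarith

lemma uu_add_inv_uu {k : ℕ} (hk : 1 ≤ k) : uu k + (uu k)⁻¹ = 2 * Real.sqrt (pp k) := by
  have hp := one_le_pp hk
  have h1 : Real.sqrt (pp k) ^ 2 = pp k := Real.sq_sqrt (by linarith)
  have h2 : Real.sqrt (pp k - 1) ^ 2 = pp k - 1 := Real.sq_sqrt (by linarith)
  have hinv : (uu k)⁻¹ = Real.sqrt (pp k) - Real.sqrt (pp k - 1) := by
    apply inv_eq_of_mul_eq_one_right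
    unfold uu; nlinarith
  rw [hinv, uu]; ring

lemma uu_pos (k : ℕ) : 0 < uu k := by
  have := Real.sqrt_pos.2 (pp_pos k)
  unfold uu; positivity

lemma three_zpow_one_sub (k : ℕ) : (3:ℝ) ^ (1 - (k:ℤ)) = 3 * eps k := by
  rw [eps, sub_eq_add_neg, zpow_add₀ (by norm_num), zpow_one]

lemma three_zpow_neg_natCast_sub_one {k : ℕ} (hk : 1 ≤ k) :
    (3:ℝ) ^ (-((k - 1 : ℕ) : ℤ)) = 3 * eps k := by
  rw [← three_zpow_one_sub, Nat.cast_sub hk, Nat.cast_one, neg_sub]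

lemma three_zpow_neg_natCast (j : ℕ) : (3:ℝ) ^ (-(j:ℤ)) = (3⁻¹ : ℝ) ^ j := by
  rw [zpow_neg, zpow_natCast, inv_pow]

lemma sum_range_three_zpow_neg (n : ℕ) :
    ∑ j ∈ Finset.range n, (3:ℝ) ^ (-(j:ℤ)) = 3 / 2 * (1 - (3⁻¹ : ℝ) ^ n) := by
  simp_rw [three_zpow_neg_natCast]
  rw [geom_sum_eq (by norm_num)]
  field_simp; ring

lemma sum_Icc_three_zpow_neg_le (m n : ℕ) :
    ∑ j ∈ Finset.Icc m n, (3:ℝ) ^ (-(j:ℤ)) ≤ 9 / 2 * (3:ℝ) ^ (-((m:ℤ) + 1)) := by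
  have h := geom_sum_Ico_le_of_lt_one (m := m) (n := n + 1) (x := (3⁻¹ : ℝ))
    (by norm_num) (by norm_num)
  rw [Finset.Ico_add_one_right_eq_Icc] at h
  simp_rw [three_zpow_neg_natCast]
  rw [neg_add, zpow_add₀ (by norm_num), three_zpow_neg_natCast]
  norm_num at h ⊢
  linarith

lemma integrable_indicator_Ico (c a b : ℝ) :
    Integrable (Set.indicator (Set.Ico a b) (fun _ => c)) :=
  (integrable_indicator_iff measurableSet_Ico).2 (integrableOn_const measure_Ico_lt_top.ne)

lemma integral_indicator_Ico (c : ℝ) {a b : ℝ} (hab : a ≤ b) :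
    ∫ x, Set.indicator (Set.Ico a b) (fun _ => c) x = c * (b - a) := by
  rw [integral_indicator_const c measurableSet_Ico, measureReal_def, Real.volume_Ico,
    ENNReal.toReal_ofReal (by linarith), smul_eq_mul, mul_comm]

/- `Wblock k ν ω a h j` is the block of `w_{ν+1}` on `I_j \ I_{j+1}`, `Wlast k ω a h` the last
piece, on `I_{k-1}`. -/
noncomputable def Wblock (k ν : ℕ) (ω a h : ℝ) (j : ℕ) (x : ℝ) : ℝ :=
  Set.indicator (Set.Ico (a + h - (3:ℝ)^(-(j:ℤ))*h) (a + h - (2/3)*(3:ℝ)^(-(j:ℤ))*h))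
    (fun _ => ω / pp k) x +
  W k ν (2*ω) (a + h - (2/3)*(3:ℝ)^(-(j:ℤ))*h) ((1/3)*(3:ℝ)^(-(j:ℤ))*h) x

noncomputable def Wlast (k : ℕ) (ω a h x : ℝ) : ℝ :=
  Set.indicator (Set.Ico (a + h - (3:ℝ)^(1-(k:ℤ))*h) (a + h - (1/3)*(3:ℝ)^(1-(k:ℤ))*h))
    (fun _ => ω / pp k) x +
  Set.indicator (Set.Ico (a + h - (1/3)*(3:ℝ)^(1-(k:ℤ))*h) (a + h))
    (fun _ => (4 * eps k/(1 + eps k)) * (ω / pp k)) x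

section Weights

variable {k : ℕ}

lemma W_succ_eq (ν : ℕ) (ω a h x : ℝ) :
    W k (ν + 1) ω a h x =
      ∑ j ∈ Finset.range (k - 1), Wblock k ν ω a h j x + Wlast k ω a h x := by
  simp only [W, Wblock, Wlast, Finset.sum_add_distrib]
  ring

lemma integrable_Wlast (ω a h : ℝ) : Integrable (Wlast k ω a h) :=
  (integrable_indicator_Ico _ _ _).add (integrable_indicator_Ico _ _ _)

lemma integrable_W (ν : ℕ) (ω a h : ℝ) : Integrable (W k ν ω a h) := by
  induction ν generalizing ω a h with
  | zero => exact (integrable_indicator_Ico _ _ _).add (integrable_indicator_Ico _ _ _)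
  | succ ν ih =>
    simp_rw [funext (W_succ_eq ν ω a h)]
    exact (integrable_finsetSum _ fun j _ =>
      (integrable_indicator_Ico _ _ _).add (ih _ _ _)).add (integrable_Wlast _ _ _)

lemma integrable_Wblock (ν : ℕ) (ω a h : ℝ) (j : ℕ) : Integrable (Wblock k ν ω a h j) :=
  (integrable_indicator_Ico _ _ _).add (integrable_W _ _ _ _)

lemma indicator_Ico_const_nonneg {c : ℝ} (hc : 0 ≤ c) (a b x : ℝ) :
    0 ≤ Set.indicator (Set.Ico a b) (fun _ => c) x :=
  Set.indicator_nonneg (fun _ _ => hc) x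

lemma Wlast_nonneg {ω : ℝ} (hω : 0 ≤ ω) (a h x : ℝ) : 0 ≤ Wlast k ω a h x := by
  have := pp_pos k
  have := eps_pos k
  exact add_nonneg (indicator_Ico_const_nonneg (by positivity) _ _ _)
    (indicator_Ico_const_nonneg (by positivity) _ _ _)

lemma W_nonneg (ν : ℕ) {ω : ℝ} (hω : 0 ≤ ω) (a h x : ℝ) : 0 ≤ W k ν ω a h x := by
  have := Real.sqrt_pos.2 (pp_pos k)
  have := uu_pos k
  induction ν generalizing ω a h with
  | zero =>
    exact add_nonneg (indicator_Ico_const_nonneg (by positivity) _ _ _)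
      (indicator_Ico_const_nonneg (by positivity) _ _ _)
  | succ ν ih =>
    rw [W_succ_eq]
    refine add_nonneg (Finset.sum_nonneg fun j _ => add_nonneg ?_ (ih (by positivity) _ _))
      (Wlast_nonneg hω _ _ _)
    exact indicator_Ico_const_nonneg (div_nonneg hω (pp_pos k).le) _ _ _

lemma Wblock_nonneg (ν : ℕ) {ω : ℝ} (hω : 0 ≤ ω) (a h : ℝ) (j : ℕ) (x : ℝ) :
    0 ≤ Wblock k ν ω a h j x :=
  add_nonneg (indicator_Ico_const_nonneg (div_nonneg hω (pp_pos k).le) _ _ _)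
    (W_nonneg ν (by positivity) _ _ _)

lemma indicator_Ico_eq_zero_of_le {a b x : ℝ} (hx : b ≤ x) (f : ℝ → ℝ) :
    Set.indicator (Set.Ico a b) f x = 0 :=
  Set.indicator_of_notMem (fun h => (not_le.2 h.2) hx) f

lemma W_eq_zero_of_le (ν : ℕ) (ω a : ℝ) {h x : ℝ} (hh : 0 ≤ h) (hx : a + h ≤ x) :
    W k ν ω a h x = 0 := by
  induction ν generalizing ω a h with
  | zero =>
    rw [W, indicator_Ico_eq_zero_of_le (by linarith), indicator_Ico_eq_zero_of_le hx, add_zero]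
  | succ ν ih =>
    have ht : ∀ j : ℕ, 0 ≤ (3:ℝ) ^ (-(j:ℤ)) * h := fun j => by positivity
    have he : 0 ≤ (3:ℝ) ^ (1 - (k:ℤ)) * h := by positivity
    rw [W_succ_eq, Wlast, indicator_Ico_eq_zero_of_le (by linarith),
      indicator_Ico_eq_zero_of_le hx, add_zero, add_zero]
    refine Finset.sum_eq_zero fun j _ => ?_
    rw [Wblock, indicator_Ico_eq_zero_of_le (by linarith [ht j]), ih _ _ (by linarith [ht j])
      (by linarith [ht j]), add_zero]

lemma Wblock_eq_zero_of_le (ν : ℕ) (ω a : ℝ) {h : ℝ} (j : ℕ) {x : ℝ} (hh : 0 ≤ h)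
    (hx : a + h - (1/3) * (3:ℝ) ^ (-(j:ℤ)) * h ≤ x) : Wblock k ν ω a h j x = 0 := by
  have ht : 0 ≤ (3:ℝ) ^ (-(j:ℤ)) * h := by positivity
  rw [Wblock, indicator_Ico_eq_zero_of_le (by linarith),
    W_eq_zero_of_le _ _ _ (by positivity) (by linarith), add_zero]

lemma integral_Wblock (ν : ℕ) (ω a : ℝ) {h : ℝ} (j : ℕ) (hh : 0 ≤ h)
    (hW : ∫ x, W k ν (2*ω) (a + h - (2/3)*(3:ℝ)^(-(j:ℤ))*h) ((1/3)*(3:ℝ)^(-(j:ℤ))*h) x =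
      2 * ω * ((1/3) * (3:ℝ) ^ (-(j:ℤ)) * h)) :
    ∫ x, Wblock k ν ω a h j x = (ω / pp k + 2 * ω) / 3 * ((3:ℝ) ^ (-(j:ℤ)) * h) := by
  have ht : 0 ≤ (3:ℝ) ^ (-(j:ℤ)) * h := by positivity
  simp only [Wblock]
  rw [integral_add (integrable_indicator_Ico _ _ _) (integrable_W _ _ _ _), hW,
    integral_indicator_Ico _ (by linarith)]
  ring

lemma integral_Wlast (ω a : ℝ) {h : ℝ} (hh : 0 ≤ h) :
    ∫ x, Wlast k ω a h x = ω / pp k * (2 * eps k + 4 * eps k ^ 2 / (1 + eps k)) * h := by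
  have he : 0 ≤ eps k * h := mul_nonneg (eps_pos k).le hh
  simp only [Wlast]
  rw [integral_add (integrable_indicator_Ico _ _ _) (integrable_indicator_Ico _ _ _),
    three_zpow_one_sub, integral_indicator_Ico _ (by linarith),
    integral_indicator_Ico _ (by linarith)]
  ring

lemma integral_W (hk : 1 ≤ k) (ν : ℕ) (ω a : ℝ) {h : ℝ} (hh : 0 ≤ h) :
    ∫ x, W k ν ω a h x = ω * h := by
  induction ν generalizing ω a h with
  | zero =>
    have hs := Real.sqrt_pos.2 (pp_pos k)
    have hu := uu_pos k
    have hsum := uu_add_inv_uu hk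
    simp only [W]
    rw [integral_add (integrable_indicator_Ico _ _ _) (integrable_indicator_Ico _ _ _),
      integral_indicator_Ico _ (by linarith), integral_indicator_Ico _ (by linarith)]
    field_simp at hsum ⊢
    linear_combination ω * h * hsum
  | succ ν ih =>
    simp_rw [W_succ_eq]
    rw [integral_add (integrable_finsetSum _ fun j _ => integrable_Wblock _ _ _ _ _)
      (integrable_Wlast _ _ _), integral_finsetSum _ fun j _ => integrable_Wblock _ _ _ _ _,
      Finset.sum_congr rfl fun j _ => integral_Wblock ν ω a j hh (ih _ _ (by positivity)),
      ← Finset.mul_sum, ← Finset.sum_mul, sum_range_three_zpow_neg,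
      ← three_zpow_neg_natCast, three_zpow_neg_natCast_sub_one hk,
      integral_Wlast _ _ hh]
    have key := three_mul_eps_mul_pp k
    have := pp_pos k
    have := eps_pos k
    field_simp at key ⊢
    linear_combination (-ω*h) * key

lemma integral_Wblock_le (hk : 1 ≤ k) (ν : ℕ) {ω : ℝ} (hω : 0 ≤ ω) (a : ℝ) {h : ℝ} (j : ℕ)
    (hh : 0 ≤ h) : ∫ x, Wblock k ν ω a h j x ≤ ω * ((3:ℝ) ^ (-(j:ℤ)) * h) := by
  rw [integral_Wblock ν ω a j hh (integral_W hk _ _ _ (by positivity))]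
  have : ω / pp k ≤ ω := div_le_self hω (one_le_pp hk)
  gcongr
  linarith

lemma integral_Wlast_le (hk : 1 ≤ k) {ω : ℝ} (hω : 0 ≤ ω) (a : ℝ) {h : ℝ} (hh : 0 ≤ h) :
    ∫ x, Wlast k ω a h x ≤ ω * ((3:ℝ) ^ (-((k - 1 : ℕ) : ℤ)) * h) := by
  have he := eps_pos k
  have hp := one_le_pp hk
  have hε : 4 * eps k ^ 2 / (1 + eps k) ≤ eps k := by
    rw [div_le_iff₀ (by positivity)]
    nlinarith [eps_le_one_third hk]
  rw [integral_Wlast _ _ hh, three_zpow_neg_natCast_sub_one hk]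
  calc ω / pp k * (2 * eps k + 4 * eps k ^ 2 / (1 + eps k)) * h
      ≤ ω * (2 * eps k + eps k) * h := by gcongr; exact div_le_self hω hp
    _ = ω * (3 * eps k * h) := by ring

lemma setIntegral_W_succ_le (hk : 1 ≤ k) (ν : ℕ) {ω : ℝ} (hω : 0 ≤ ω) (a : ℝ) {h : ℝ}
    (hh : 0 ≤ h) {m : ℕ} (hm : m ≤ k - 1) :
    ∫ x in Set.Ico (a + h - (3:ℝ)^(-(m:ℤ))*h) (a + h), W k (ν + 1) ω a h x ≤
      ω * ∑ j ∈ Finset.Icc m (k-1), (3:ℝ)^(-(j:ℤ))*h := by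
  set g : ℝ → ℝ := fun x => ∑ j ∈ Finset.Ico m (k - 1), Wblock k ν ω a h j x + Wlast k ω a h x
  have hW_eq : Set.EqOn (W k (ν + 1) ω a h) g (Set.Ico (a + h - (3:ℝ)^(-(m:ℤ))*h) (a + h)) := by
    intro x hx
    rw [W_succ_eq, Finset.range_eq_Ico, ← Finset.sum_Ico_consecutive _ (Nat.zero_le m) hm,
      Finset.sum_eq_zero, zero_add]
    intro j hj
    have hjm : (3:ℝ) ^ (-(m:ℤ)) ≤ 1 / 3 * (3:ℝ) ^ (-(j:ℤ)) := by
      rw [three_zpow_neg_natCast, three_zpow_neg_natCast, one_div, ← pow_succ']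
      exact pow_le_pow_of_le_one (by norm_num) (by norm_num) (Finset.mem_Ico.1 hj).2
    exact Wblock_eq_zero_of_le ν ω a j hh (by nlinarith [hx.1])
  have hg_int : Integrable g :=
    (integrable_finsetSum _ fun j _ => integrable_Wblock _ _ _ _ _).add (integrable_Wlast _ _ _)
  have hg_nonneg : ∀ x, 0 ≤ g x := fun x =>
    add_nonneg (Finset.sum_nonneg fun j _ => Wblock_nonneg ν hω _ _ _ _) (Wlast_nonneg hω _ _ _)
  calc ∫ x in Set.Ico (a + h - (3:ℝ)^(-(m:ℤ))*h) (a + h), W k (ν + 1) ω a h x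
      = ∫ x in Set.Ico (a + h - (3:ℝ)^(-(m:ℤ))*h) (a + h), g x :=
        setIntegral_congr_fun measurableSet_Ico hW_eq
    _ ≤ ∫ x, g x := setIntegral_le_integral hg_int (Filter.Eventually.of_forall hg_nonneg)
    _ = ∑ j ∈ Finset.Ico m (k - 1), (∫ x, Wblock k ν ω a h j x) + ∫ x, Wlast k ω a h x := by
        rw [integral_add (integrable_finsetSum _ fun j _ => integrable_Wblock _ _ _ _ _)
          (integrable_Wlast _ _ _), integral_finsetSum _ fun j _ => integrable_Wblock _ _ _ _ _]
    _ ≤ ∑ j ∈ Finset.Ico m (k - 1), ω * ((3:ℝ) ^ (-(j:ℤ)) * h) +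
          ω * ((3:ℝ) ^ (-((k - 1 : ℕ) : ℤ)) * h) := by
        gcongr with j
        · exact integral_Wblock_le hk ν hω a j hh
        · exact integral_Wlast_le hk hω a hh
    _ = ω * ∑ j ∈ Finset.Icc m (k-1), (3:ℝ)^(-(j:ℤ))*h := by
        rw [← Finset.Ico_add_one_right_eq_Icc, Finset.sum_Ico_succ_top hm, mul_add,
          Finset.mul_sum]

end Weights

theorem W_tail_integral_general (k : ℕ) (hk : 2 ≤ k) (ω a h : ℝ) (hω : 0 < ω)
    (hh : 0 < h) (ν : ℕ) (hν : 1 ≤ ν) (m : ℕ) (hm : m ≤ k - 2) :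
    (∫ x in Set.Ico (a + h - (3:ℝ)^(-(m:ℤ))*h) (a + h), W k ν ω a h x ≤
      ω * ∑ j ∈ Finset.Icc m (k-1), (3:ℝ)^(-(j:ℤ))*h) ∧
    ω * ∑ j ∈ Finset.Icc m (k-1), (3:ℝ)^(-(j:ℤ))*h ≤
      (9*ω/2) * ((3:ℝ)^(-((m:ℤ)+1))*h) := by
  obtain ⟨ν, rfl⟩ := Nat.exists_eq_add_of_le' hν
  refine ⟨setIntegral_W_succ_le (by omega) ν hω.le a hh.le (by omega), ?_⟩
  calc ω * ∑ j ∈ Finset.Icc m (k-1), (3:ℝ)^(-(j:ℤ))*h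
      = ω * h * ∑ j ∈ Finset.Icc m (k-1), (3:ℝ)^(-(j:ℤ)) := by rw [← Finset.sum_mul]; ring
    _ ≤ ω * h * (9 / 2 * (3:ℝ) ^ (-((m:ℤ) + 1))) := by
        gcongr; exact sum_Icc_three_zpow_neg_le m (k - 1)
    _ = (9*ω/2) * ((3:ℝ)^(-((m:ℤ)+1))*h) := by ring

/-- For `ν ≥ 1` and `0 ≤ m ≤ k−2`:
`∫_{I_m} w_ν(ω,σ,I) ≤ ω Σ_{j=m}^{k−1} |I_j| ≤ (9ω/2)|I_{m+1}|`,
where `I_j = [a+h−3^{-j}h, a+h)` is the right subinterval of `I` of length `3^{-j}h`. -/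
theorem W_tail_integral (k : ℕ) (hk : 2 ≤ k) (ω σ a h : ℝ) (hω : 0 < ω) (hσ : 0 < σ)
    (hωσ : ω * σ = pp k) (hh : 0 < h) (ν : ℕ) (hν : 1 ≤ ν) (m : ℕ) (hm : m ≤ k - 2) :
    (∫ x in Set.Ico (a + h - (3:ℝ)^(-(m:ℤ))*h) (a + h), W k ν ω a h x ≤
      ω * ∑ j ∈ Finset.Icc m (k-1), (3:ℝ)^(-(j:ℤ))*h) ∧
    ω * ∑ j ∈ Finset.Icc m (k-1), (3:ℝ)^(-(j:ℤ))*h ≤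
      (9*ω/2) * ((3:ℝ)^(-((m:ℤ)+1))*h) :=
  W_tail_integral_general k hk ω a h hω hh ν hν m hm
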